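/- For r ≥ 1, g ≥ 0, the generating function Π_{i=0}^{r−1} (1+t^{2i+1}u)^{2g}/((1−t^{2i}u)(1−t^{2i+2}u)), expanded as a power series in u with coefficients in ℤ[t], has coefficient of u^n a polynomial in t of degree 2nr with leading coefficient 1. -/

import Mathlib

open PowerSeries Polynomial

/-- geometric series `∑ X^(k n) u^n` -/
noncomputable def geo (k : ℕ) : PowerSeries (Polynomial ℤ) :=
  PowerSeries.mk (fun n => (X : Polynomial ℤ) ^ (k * n))

lemma geo_mul (k : ℕ) :
    geo k * (1 - PowerSeries.C (R := Polynomial ℤ) ((X : Polynomial ℤ) ^ k) * PowerSeries.X) = 1 := by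
  have hrw : geo k * (PowerSeries.C (R := Polynomial ℤ) ((X : Polynomial ℤ) ^ k) * PowerSeries.X)
      = PowerSeries.C (R := Polynomial ℤ) ((X : Polynomial ℤ) ^ k) * (PowerSeries.X * geo k) := by
    ring
  apply PowerSeries.ext
  intro n
  rw [mul_sub, mul_one, map_sub, hrw]
  cases n with
  | zero =>
    rw [PowerSeries.coeff_zero_eq_constantCoeff_apply, PowerSeries.coeff_zero_eq_constantCoeff_apply,
      PowerSeries.coeff_zero_eq_constantCoeff_apply]
    simp [geo]
  | succ m =>
    rw [PowerSeries.coeff_C_mul, PowerSeries.coeff_succ_X_mul]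
    simp only [geo, PowerSeries.coeff_mk, PowerSeries.coeff_one, Nat.succ_ne_zero, if_false]
    rw [sub_eq_zero, ← pow_add]
    congr 1
    ring

/-- slope bound predicate -/
def Sl (c : ℕ) (G : PowerSeries (Polynomial ℤ)) : Prop :=
  ∀ n, (PowerSeries.coeff (R := Polynomial ℤ) n G).natDegree ≤ c * n

lemma sl_one (c : ℕ) : Sl c 1 := by
  intro n
  rw [PowerSeries.coeff_one]
  split <;> simp

lemma sl_mul {c : ℕ} {G H : PowerSeries (Polynomial ℤ)} (hG : Sl c G) (hH : Sl c H) :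
    Sl c (G * H) := by
  intro n
  rw [PowerSeries.coeff_mul]
  apply Polynomial.natDegree_sum_le_of_forall_le
  intro p hp
  have hps := Finset.HasAntidiagonal.mem_antidiagonal.mp hp
  calc (PowerSeries.coeff (R := Polynomial ℤ) p.1 G * PowerSeries.coeff (R := Polynomial ℤ) p.2 H).natDegree
      ≤ _ + _ := Polynomial.natDegree_mul_le
    _ ≤ c * p.1 + c * p.2 := Nat.add_le_add (hG p.1) (hH p.2)
    _ = c * n := by rw [← Nat.mul_add, hps]

lemma sl_prod {c : ℕ} {s : Finset ℕ} {f : ℕ → PowerSeries (Polynomial ℤ)}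
    (h : ∀ i ∈ s, Sl c (f i)) : Sl c (∏ i ∈ s, f i) := by
  classical
  induction s using Finset.induction with
  | empty => simpa using sl_one c
  | insert _ _ hi ih =>
    rw [Finset.prod_insert hi]
    exact sl_mul (h _ (Finset.mem_insert_self _ _))
      (ih fun i his => h i (Finset.mem_insert_of_mem his))

lemma sl_pow {c : ℕ} {G : PowerSeries (Polynomial ℤ)} (hG : Sl c G) (m : ℕ) : Sl c (G ^ m) := by
  induction m with
  | zero => simpa using sl_one c
  | succ k ih => rw [pow_succ]; exact sl_mul ih hG

lemma sl_geo {k c : ℕ} (hk : k ≤ c) : Sl c (geo k) := by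
  intro n
  simp only [geo, PowerSeries.coeff_mk]
  calc ((X : Polynomial ℤ) ^ (k * n)).natDegree ≤ k * n := by
        simp [Polynomial.natDegree_X_pow]
    _ ≤ c * n := Nat.mul_le_mul_right n hk

lemma sl_one_add {k c : ℕ} (hk : k ≤ c) :
    Sl c (1 + PowerSeries.C (R := Polynomial ℤ) ((X : Polynomial ℤ) ^ k) * PowerSeries.X) := by
  intro n
  rw [map_add, PowerSeries.coeff_one]
  match n with
  | 0 => simp
  | (m+1) =>
    rw [mul_comm (PowerSeries.C (R := Polynomial ℤ) _) PowerSeries.X, PowerSeries.coeff_succ_X_mul,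
      PowerSeries.coeff_C]
    match m with
    | 0 =>
      simp only [if_pos rfl]
      simpa using hk
    | (j+1) => simp

lemma helper (p : Polynomial ℤ) (d : ℕ) (h : p.degree < d) :
    (p + (Polynomial.X : Polynomial ℤ) ^ d).natDegree = d ∧
      (p + (Polynomial.X : Polynomial ℤ) ^ d).leadingCoeff = 1 := by
  have hd : ((Polynomial.X : Polynomial ℤ) ^ d).degree = d := Polynomial.degree_X_pow d
  have h' : p.degree < ((Polynomial.X : Polynomial ℤ) ^ d).degree := by rw [hd]; exact h
  constructor
  · rw [Polynomial.natDegree_eq_of_degree_eq (Polynomial.degree_add_eq_right_of_degree_lt h'),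
      Polynomial.natDegree_X_pow]
  · rw [Polynomial.leadingCoeff_add_of_degree_lt h', Polynomial.leadingCoeff_X_pow]

/-- The coefficient of `uⁿ` in the generating function
`∏_{i=0}^{r-1} (1+t^{2i+1}u)^{2g} / ((1-t^{2i}u)(1-t^{2i+2}u))`, expanded as a power
series in `u` with coefficients in `ℤ[t]`, is a polynomial in `t` of degree `2nr` with
leading coefficient `1`.  The power series `F` is characterized by the identity with
denominators cleared. -/
theorem stmt_13 (g r : ℕ) (hr : 1 ≤ r) (F : PowerSeries (Polynomial ℤ))
    (hF : F * ∏ i ∈ Finset.range r,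
        ((1 - PowerSeries.C (R := Polynomial ℤ) ((X : Polynomial ℤ) ^ (2 * i)) * PowerSeries.X) *
         (1 - PowerSeries.C (R := Polynomial ℤ) ((X : Polynomial ℤ) ^ (2 * i + 2)) * PowerSeries.X))
      = ∏ i ∈ Finset.range r,
        (1 + PowerSeries.C (R := Polynomial ℤ) ((X : Polynomial ℤ) ^ (2 * i + 1)) * PowerSeries.X) ^ (2 * g)) :
    ∀ n : ℕ, (PowerSeries.coeff (R := Polynomial ℤ) n F).natDegree = 2 * n * r ∧
      (PowerSeries.coeff (R := Polynomial ℤ) n F).leadingCoeff = 1 := by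
  classical
  set N : PowerSeries (Polynomial ℤ) := ∏ i ∈ Finset.range r,
      (1 + PowerSeries.C (R := Polynomial ℤ) ((X : Polynomial ℤ) ^ (2 * i + 1)) * PowerSeries.X) ^ (2 * g)
    with hN
  set D : PowerSeries (Polynomial ℤ) := ∏ i ∈ Finset.range r,
      ((1 - PowerSeries.C (R := Polynomial ℤ) ((X : Polynomial ℤ) ^ (2 * i)) * PowerSeries.X) *
       (1 - PowerSeries.C (R := Polynomial ℤ) ((X : Polynomial ℤ) ^ (2 * i + 2)) * PowerSeries.X))
    with hD
  set G : PowerSeries (Polynomial ℤ) :=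
      N * ((∏ i ∈ Finset.range r, geo (2 * i)) * ∏ i ∈ Finset.range (r - 1), geo (2 * i + 2))
    with hG
  -- F = G * geo (2 r)
  have hDne : D ≠ 0 := by
    intro h0
    have : PowerSeries.constantCoeff (R := Polynomial ℤ) D = 1 := by
      rw [hD, map_prod]
      apply Finset.prod_eq_one
      intro i _
      simp
    rw [h0] at this
    simp at this
  have key : F = G * geo (2 * r) := by
    apply mul_right_cancel₀ hDne
    rw [hF]
    symm
    have hsplit : (∏ i ∈ Finset.range r, geo (2 * i + 2)) =
        (∏ i ∈ Finset.range (r - 1), geo (2 * i + 2)) * geo (2 * (r - 1) + 2) := by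
      conv_lhs => rw [show r = (r - 1) + 1 by omega]
      rw [Finset.prod_range_succ]
    have h2r : 2 * (r - 1) + 2 = 2 * r := by omega
    have hprod : ((∏ i ∈ Finset.range r, geo (2 * i)) *
          ∏ i ∈ Finset.range (r - 1), geo (2 * i + 2)) * geo (2 * r) * D = 1 := by
      rw [hD, ← h2r, mul_assoc ((∏ i ∈ Finset.range r, geo (2 * i))), ← hsplit]
      rw [Finset.prod_mul_distrib]
      rw [show ((∏ i ∈ Finset.range r, geo (2 * i)) * ∏ i ∈ Finset.range r, geo (2 * i + 2)) *
          ((∏ i ∈ Finset.range r,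
            (1 - PowerSeries.C (R := Polynomial ℤ) ((X : Polynomial ℤ) ^ (2 * i)) * PowerSeries.X)) *
           ∏ i ∈ Finset.range r,
            (1 - PowerSeries.C (R := Polynomial ℤ) ((X : Polynomial ℤ) ^ (2 * i + 2)) * PowerSeries.X))
        = ((∏ i ∈ Finset.range r, geo (2 * i)) *
            ∏ i ∈ Finset.range r,
            (1 - PowerSeries.C (R := Polynomial ℤ) ((X : Polynomial ℤ) ^ (2 * i)) * PowerSeries.X)) *
          ((∏ i ∈ Finset.range r, geo (2 * i + 2)) *
            ∏ i ∈ Finset.range r,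
            (1 - PowerSeries.C (R := Polynomial ℤ) ((X : Polynomial ℤ) ^ (2 * i + 2)) * PowerSeries.X))
        from by ring]
      rw [← Finset.prod_mul_distrib, ← Finset.prod_mul_distrib]
      rw [Finset.prod_congr rfl (fun i _ => geo_mul (2 * i)),
        Finset.prod_congr rfl (fun i _ => geo_mul (2 * i + 2))]
      simp
    calc G * geo (2 * r) * D
        = N * (((∏ i ∈ Finset.range r, geo (2 * i)) *
            ∏ i ∈ Finset.range (r - 1), geo (2 * i + 2)) * geo (2 * r) * D) := by
          rw [hG]; ring
      _ = N := by rw [hprod, mul_one]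
  -- slope bound for G
  have hrpos : (0 : ℕ) < 2 * r - 1 + 1 := Nat.succ_pos _
  have hslope : Sl (2 * r - 1) G := by
    apply sl_mul
    · apply sl_prod
      intro i hi
      have hi' : i < r := Finset.mem_range.mp hi
      exact sl_pow (sl_one_add (by omega)) (2 * g)
    · apply sl_mul
      · apply sl_prod
        intro i hi
        have hi' : i < r := Finset.mem_range.mp hi
        exact sl_geo (by omega)
      · apply sl_prod
        intro i hi
        have hi' : i < r - 1 := Finset.mem_range.mp hi
        exact sl_geo (by omega)
  -- constant coefficient of G is 1
  have hG0 : PowerSeries.coeff (R := Polynomial ℤ) 0 G = 1 := by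
    rw [PowerSeries.coeff_zero_eq_constantCoeff_apply, hG, map_mul, map_mul, hN,
      map_prod, map_prod, map_prod]
    rw [Finset.prod_congr rfl (fun i _ => by
        rw [map_pow]
        simp : ∀ i ∈ Finset.range r, (PowerSeries.constantCoeff (R := Polynomial ℤ))
          ((1 + PowerSeries.C (R := Polynomial ℤ) ((X : Polynomial ℤ) ^ (2 * i + 1)) *
            PowerSeries.X) ^ (2 * g)) = 1)]
    rw [Finset.prod_congr rfl (fun i _ => by simp [geo] : ∀ i ∈ Finset.range r,
        (PowerSeries.constantCoeff (R := Polynomial ℤ)) (geo (2 * i)) = 1)]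
    rw [Finset.prod_congr rfl (fun i _ => by simp [geo] : ∀ i ∈ Finset.range (r - 1),
        (PowerSeries.constantCoeff (R := Polynomial ℤ)) (geo (2 * i + 2)) = 1)]
    simp
  -- main computation
  intro n
  have hcoeff : PowerSeries.coeff (R := Polynomial ℤ) n F =
      (∑ i ∈ Finset.range n, PowerSeries.coeff (R := Polynomial ℤ) (i + 1) G *
        (X : Polynomial ℤ) ^ (2 * r * (n - (i + 1)))) + (X : Polynomial ℤ) ^ (2 * r * n) := by
    rw [key, PowerSeries.coeff_mul, Finset.Nat.sum_antidiagonal_eq_sum_range_succ_mk,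
      Finset.sum_range_succ']
    simp only [geo, PowerSeries.coeff_mk, Nat.sub_zero, hG0, one_mul]
  have hdeglt : (∑ i ∈ Finset.range n, PowerSeries.coeff (R := Polynomial ℤ) (i + 1) G *
      (X : Polynomial ℤ) ^ (2 * r * (n - (i + 1)))).degree < (2 * r * n : ℕ) := by
    rcases Nat.eq_zero_or_pos n with hn | hn
    · subst hn
      simp only [Finset.range_zero, Finset.sum_empty]
      exact (by simp : ((0 : Polynomial ℤ)).degree = ⊥) ▸ (WithBot.bot_lt_coe _)
    · have hnd : (∑ i ∈ Finset.range n, PowerSeries.coeff (R := Polynomial ℤ) (i + 1) G *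
          (X : Polynomial ℤ) ^ (2 * r * (n - (i + 1)))).natDegree ≤ 2 * r * n - 1 := by
        apply Polynomial.natDegree_sum_le_of_forall_le
        intro i hi
        have hi' : i < n := Finset.mem_range.mp hi
        calc (PowerSeries.coeff (R := Polynomial ℤ) (i + 1) G *
              (X : Polynomial ℤ) ^ (2 * r * (n - (i + 1)))).natDegree
            ≤ _ + _ := Polynomial.natDegree_mul_le
          _ ≤ (2 * r - 1) * (i + 1) + (2 * r * (n - (i + 1))) := by
              apply Nat.add_le_add (hslope (i + 1))
              simp [Polynomial.natDegree_X_pow]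
          _ ≤ 2 * r * n - 1 := by
              have key2 : (2 * r - 1) * (i + 1) + 2 * r * (n - (i + 1)) = 2 * r * n - (i + 1) := by
                obtain ⟨k, hk⟩ := Nat.exists_eq_add_of_le (show i + 1 ≤ n from hi')
                obtain ⟨m, hm⟩ := Nat.exists_eq_add_of_le (show 1 ≤ 2 * r by omega)
                subst hk
                rw [hm]
                simp only [Nat.add_sub_cancel_left]
                have hexp : (1 + m) * (i + 1 + k) = (i + 1) + (m * (i + 1) + (1 + m) * k) := by
                  ring
                rw [hexp, Nat.add_sub_cancel_left]
              omega
      calc (∑ i ∈ Finset.range n, PowerSeries.coeff (R := Polynomial ℤ) (i + 1) G *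
            (X : Polynomial ℤ) ^ (2 * r * (n - (i + 1)))).degree
          ≤ ((2 * r * n - 1 : ℕ) : WithBot ℕ) :=
            Polynomial.degree_le_of_natDegree_le hnd
        _ < ((2 * r * n : ℕ) : WithBot ℕ) := by
            have hpos : 0 < 2 * r * n := Nat.mul_pos (by omega) hn
            exact_mod_cast (by omega : 2 * r * n - 1 < 2 * r * n)
  rw [hcoeff, show 2 * n * r = 2 * r * n from by ring]
  exact helper _ _ hdeglt
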